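/- arXiv:2410.14221 — 2 statements merged into one kernel-verified Lean document; each statement's English description precedes it below -/
import Mathlib

section
/- The strain at the central vortex vanishes: for ζ = e^{2πi/(N-1)} with N ≥ 4, the sum ∑_{j=1}^{N-1} J_K(-ζ^j) of the Biot–Savart Jacobians evaluated at the points -ζ^j is the zero matrix. -/
open Complex Finset

/-- Jacobian matrix of the Biot–Savart kernel `K(x) = x⊥/(2π|x|²)` at `y ∈ ℂ ≅ ℝ²`. -/
noncomputable def JK (y : ℂ) : Matrix (Fin 2) (Fin 2) ℝ :=
  (1 / (2 * Real.pi * ‖y‖ ^ 4)) •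
    !![2 * y.re * y.im, y.im ^ 2 - y.re ^ 2; y.im ^ 2 - y.re ^ 2, -(2 * y.re * y.im)]

theorem stmt11 (N : ℕ) (hN : 4 ≤ N)
    (ζ : ℂ) (hζ : ζ = Complex.exp (2 * Real.pi * Complex.I / ((N : ℂ) - 1))) :
    ∑ j ∈ Finset.Icc 1 (N - 1), JK (-ζ ^ j) = 0 := by
  have hNc : ((N : ℂ) - 1) ≠ 0 := by
    intro h
    have : (N : ℂ) = 1 := by linear_combination h
    have : (N : ℕ) = 1 := by exact_mod_cast this
    omega
  -- |ζ| = 1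
  have habs : ‖ζ‖ = 1 := by
    rw [hζ, Complex.norm_exp]
    have : (2 * Real.pi * Complex.I / ((N : ℂ) - 1)).re = 0 := by
      simp [Complex.div_re, Complex.mul_re, Complex.mul_im]
    rw [this, Real.exp_zero]
  -- ζ^(N-1) = 1
  have hpow : ζ ^ (N - 1) = 1 := by
    rw [hζ, ← Complex.exp_nat_mul]
    have : (N - 1 : ℕ) * (2 * Real.pi * Complex.I / ((N : ℂ) - 1)) =
        2 * Real.pi * Complex.I := by
      have hcast : ((N - 1 : ℕ) : ℂ) = (N : ℂ) - 1 := by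
        push_cast [Nat.cast_sub (by omega : 1 ≤ N)]; ring
      rw [hcast]; field_simp
    rw [this, Complex.exp_two_pi_mul_I]
  -- ζ² ≠ 1
  have hsq : ζ ^ 2 ≠ 1 := by
    intro h
    rw [hζ, ← Complex.exp_nat_mul, Complex.exp_eq_one_iff] at h
    obtain ⟨n, hn⟩ := h
    have hI : ((Real.pi : ℂ) * Complex.I) ≠ 0 := by
      simp [Real.pi_ne_zero, Complex.I_ne_zero]
    field_simp at hn
    have h' : (4 : ℂ) * (Real.pi * Complex.I) = (n * 2 * ((N:ℂ)-1)) * (Real.pi * Complex.I) := by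
      push_cast at hn
      linear_combination (2 * (Real.pi * Complex.I)) * hn
    have h2 : (4 : ℂ) = n * 2 * ((N:ℂ)-1) := mul_right_cancel₀ hI h'
    have h2' : (4 : ℤ) = n * 2 * ((N : ℤ) - 1) := by exact_mod_cast h2
    have hN3 : (3 : ℤ) ≤ (N : ℤ) - 1 := by omega
    rcases le_or_gt n 0 with h0 | h0
    · nlinarith
    · have h1 : 1 ≤ n := h0
      nlinarith
  -- geometric sum vanishes
  have hgeom : ∑ j ∈ Finset.Icc 1 (N - 1), (ζ ^ 2) ^ j = 0 := by
    rw [← Finset.Ico_add_one_right_eq_Icc, Finset.sum_Ico_eq_sum_range]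
    have : ∀ j ∈ Finset.range (N - 1 + 1 - 1), (ζ ^ 2) ^ (1 + j) = ζ ^ 2 * (ζ ^ 2) ^ j := by
      intro j _; rw [pow_add, pow_one]
    rw [Finset.sum_congr rfl this, ← Finset.mul_sum, geom_sum_eq hsq]
    have hw : (ζ ^ 2) ^ (N - 1 + 1 - 1) = 1 := by
      simp only [Nat.add_sub_cancel]
      rw [← pow_mul, mul_comm, pow_mul, hpow, one_pow]
    rw [hw]
    simp
  -- rewrite each summand
  have hterm : ∀ j ∈ Finset.Icc 1 (N - 1), JK (-ζ ^ j) =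
      (1 / (2 * Real.pi)) •
        !![((ζ ^ 2) ^ j).im, -((ζ ^ 2) ^ j).re;
           -((ζ ^ 2) ^ j).re, -((ζ ^ 2) ^ j).im] := by
    intro j _
    have habsj : ‖-ζ ^ j‖ = 1 := by
      rw [norm_neg, norm_pow, habs, one_pow]
    have h2j : (ζ ^ 2) ^ j = (ζ ^ j) * (ζ ^ j) := by
      rw [← pow_mul, two_mul, pow_add]
    unfold JK
    rw [habsj]
    congr 1
    · norm_num
    · ext i k
      fin_cases i <;> fin_cases k <;>
        simp [h2j, Complex.mul_re, Complex.mul_im] <;> ring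
  rw [Finset.sum_congr rfl hterm, ← Finset.smul_sum]
  have hzero : ∑ j ∈ Finset.Icc 1 (N - 1),
      !![((ζ ^ 2) ^ j).im, -((ζ ^ 2) ^ j).re;
         -((ζ ^ 2) ^ j).re, -((ζ ^ 2) ^ j).im] = (0 : Matrix (Fin 2) (Fin 2) ℝ) := by
    ext i k
    fin_cases i <;> fin_cases k <;>
      simp [Matrix.sum_apply, ← Complex.im_sum, ← Complex.re_sum, hgeom]
  rw [hzero, smul_zero]
end

section
/- For N ≥ 4, ζ = e^{2πi/(N-1)}, and γ_N = (N-2)(N-6)/12, the strain sum at the vortex z_{N-1} = 1 vanishes: γ_N J_K(1) + ∑_{j=1}^{N-2} J_K(1 - ζ^j) = 0 (zero 2×2 matrix). -/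
open Complex Finset

private lemma sum_id' (M : ℕ) : ∑ k ∈ range M, (k:ℂ) = M*(M-1)/2 := by
  induction M with
  | zero => simp
  | succ n ih => rw [Finset.sum_range_succ, ih]; push_cast; ring

private lemma sum_sq' (M : ℕ) : ∑ k ∈ range M, (k:ℂ)^2 = M*(M-1)*(2*M-1)/6 := by
  induction M with
  | zero => simp
  | succ n ih => rw [Finset.sum_range_succ, ih]; push_cast; ring

private lemma telescope' (M : ℕ) (z : ℂ) :
    (1-z) * ∑ k ∈ range M, (k:ℂ) * z^k = (∑ k ∈ range M, z^k) - 1 - ((M:ℂ)-1)*z^M := by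
  induction M with
  | zero => simp
  | succ n ih =>
      rw [Finset.sum_range_succ, Finset.sum_range_succ (f := fun k => z^k), mul_add, ih]
      push_cast; ring

private lemma geom_zero (M : ℕ) (z : ℂ) (hz : z ^ M = 1) (h1 : z ≠ 1) :
    ∑ k ∈ range M, z^k = 0 := by
  rw [geom_sum_eq h1, hz, sub_self, zero_div]

private lemma inv_sq_eq (M : ℕ) (hM : (M:ℂ) ≠ 0) (z : ℂ) (hz : z ^ M = 1) (h1 : z ≠ 1) :
    ((1 - z)⁻¹)^2 = (∑ k ∈ range M, (k:ℂ) * z^k)^2 / (M:ℂ)^2 := by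
  have h1z : (1:ℂ) - z ≠ 0 := sub_ne_zero.2 (Ne.symm h1)
  have key1 : (1-z) * ∑ k ∈ range M, (k:ℂ) * z^k = -(M:ℂ) := by
    rw [telescope', geom_zero M z hz h1, hz]; ring
  have h2 : (1-z)^2 * (∑ k ∈ range M, (k:ℂ) * z^k)^2 = (M:ℂ)^2 := by
    rw [← mul_pow, key1]; ring
  rw [eq_div_iff (pow_ne_zero 2 hM), ← h2, inv_pow]
  field_simp

private lemma sum_inv_sq (M : ℕ) (hM : 1 ≤ M) (ζ : ℂ) (hprim : IsPrimitiveRoot ζ M) :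
    ∑ j ∈ Icc 1 (M-1), ((1 - ζ^j)⁻¹)^2 = ((M:ℂ)-1)*(5-(M:ℂ))/12 := by
  have hM0 : (M:ℂ) ≠ 0 := Nat.cast_ne_zero.2 (by omega)
  have hgeom : ∀ m : ℕ, ∑ j ∈ Icc 1 (M-1), (ζ^m)^j
      = (if M ∣ m then (M:ℂ) else 0) - 1 := by
    intro m
    have hIcc : Finset.Icc 1 (M-1) = Finset.Ico 1 M := by
      rw [← Finset.Ico_add_one_right_eq_Icc]; congr 1; omega
    have hfull : ∑ j ∈ range M, (ζ^m)^j = (if M ∣ m then (M:ℂ) else 0) := by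
      by_cases hd : M ∣ m
      · rw [if_pos hd, (hprim.pow_eq_one_iff_dvd m).2 hd]; simp
      · rw [if_neg hd]
        have h1 : ζ^m ≠ 1 := fun h => hd ((hprim.pow_eq_one_iff_dvd m).1 h)
        have hpow : (ζ^m)^M = 1 := by
          rw [← pow_mul, mul_comm, pow_mul, hprim.pow_eq_one, one_pow]
        rw [geom_sum_eq h1, hpow, sub_self, zero_div]
    have hbot := Finset.sum_eq_sum_Ico_succ_bot (a := 0) (b := M) (by omega)
      (f := fun j => (ζ^m)^j)
    rw [Finset.range_eq_Ico, hbot, pow_zero] at hfull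
    rw [hIcc]
    linear_combination hfull
  have hstep : ∀ j ∈ Icc 1 (M-1), ((1 - ζ^j)⁻¹)^2
      = (∑ k ∈ range M, ∑ l ∈ range M, (k:ℂ)*(l:ℂ)*(ζ^(k+l))^j) / (M:ℂ)^2 := by
    intro j hj
    simp only [Finset.mem_Icc] at hj
    have h1 : ζ^j ≠ 1 := hprim.pow_ne_one_of_pos_of_lt (by omega) (by omega)
    have hzM : (ζ^j)^M = 1 := by
      rw [← pow_mul, mul_comm, pow_mul, hprim.pow_eq_one, one_pow]
    rw [inv_sq_eq M hM0 (ζ^j) hzM h1]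
    congr 1
    rw [sq, Finset.sum_mul_sum]
    apply Finset.sum_congr rfl; intro k _
    apply Finset.sum_congr rfl; intro l _
    have hp : (ζ^j)^k * (ζ^j)^l = (ζ^(k+l))^j := by
      rw [← pow_mul, ← pow_mul, ← pow_add, ← pow_mul]
      congr 1; ring
    calc (k:ℂ) * (ζ^j)^k * ((l:ℂ) * (ζ^j)^l)
        = (k:ℂ)*(l:ℂ)*((ζ^j)^k * (ζ^j)^l) := by ring
      _ = (k:ℂ)*(l:ℂ)*(ζ^(k+l))^j := by rw [hp]
  have hdiag : ∀ k ∈ range M, ∑ l ∈ range M, (if M ∣ k+l then (k:ℂ)*l*M else 0)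
      = (k:ℂ)*((M:ℂ)-(k:ℂ))*M := by
    intro k hk
    simp only [Finset.mem_range] at hk
    rcases Nat.eq_zero_or_pos k with hk0 | hk0
    · subst hk0; simp
    · rw [Finset.sum_eq_single (M - k)]
      · have hk1 : k + (M - k) = M := by omega
        rw [hk1, if_pos dvd_rfl, Nat.cast_sub (by omega)]
      · intro l hl hne
        simp only [Finset.mem_range] at hl
        rw [if_neg]
        rintro ⟨c, hc⟩
        rcases c with _ | _ | c
        · omega
        · omega
        · have h2 : M*2 ≤ M*(c+1+1) := Nat.mul_le_mul_left M (by omega)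
          omega
      · intro h
        exact absurd (Finset.mem_range.2 (by omega)) h
  have expand : ∑ j ∈ Icc 1 (M-1), ((1-ζ^j)⁻¹)^2
      = (∑ k ∈ range M, ((k:ℂ)*((M:ℂ)-k)*M - (k:ℂ)*((M:ℂ)*((M:ℂ)-1)/2))) / (M:ℂ)^2 := by
    rw [Finset.sum_congr rfl hstep, ← Finset.sum_div]
    congr 1
    rw [Finset.sum_comm]
    apply Finset.sum_congr rfl
    intro k hk
    rw [Finset.sum_comm]
    have hin : ∀ l ∈ range M, ∑ j ∈ Icc 1 (M-1), (k:ℂ)*l*(ζ^(k+l))^j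
        = (if M ∣ k+l then (k:ℂ)*l*M else 0) - (k:ℂ)*l := by
      intro l _
      rw [← Finset.mul_sum, hgeom]
      split <;> ring
    rw [Finset.sum_congr rfl hin, Finset.sum_sub_distrib, hdiag k hk,
      ← Finset.mul_sum, sum_id']
  rw [expand]
  have e1 : ∀ k ∈ range M, (k:ℂ)*((M:ℂ)-k)*M - (k:ℂ)*((M:ℂ)*((M:ℂ)-1)/2)
      = ((M:ℂ)^2 - (M:ℂ)*((M:ℂ)-1)/2)*(k:ℂ) - (M:ℂ)*(k:ℂ)^2 := by
    intro k _; ring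
  rw [Finset.sum_congr rfl e1, Finset.sum_sub_distrib, ← Finset.mul_sum, ← Finset.mul_sum,
    sum_id', sum_sq']
  field_simp
  ring

private lemma JK_eq (y : ℂ) (hy : y ≠ 0) :
    JK y =
    !![ -(((y⁻¹)^2).im) / (2*Real.pi), -(((y⁻¹)^2).re) / (2*Real.pi);
        -(((y⁻¹)^2).re) / (2*Real.pi), (((y⁻¹)^2).im) / (2*Real.pi)] := by
  have hn : Complex.normSq y ≠ 0 := (Complex.normSq_pos.2 hy).ne'
  have hπ := Real.pi_ne_zero
  have habs : ‖y‖ ^ 4 = Complex.normSq y ^ 2 := by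
    rw [show (4:ℕ) = 2*2 from rfl, pow_mul, Complex.sq_norm]
  have h2im : (y^2).im = 2*y.re*y.im := by rw [sq, Complex.mul_im]; ring
  have h2re : (y^2).re = y.re^2 - y.im^2 := by rw [sq, Complex.mul_re]; ring
  have hnsq : Complex.normSq (y^2) = Complex.normSq y ^ 2 := by rw [map_pow]
  have him : ((y⁻¹)^2).im = -(2*y.re*y.im) / (Complex.normSq y)^2 := by
    rw [inv_pow, Complex.inv_im, h2im, hnsq]
  have hre : ((y⁻¹)^2).re = (y.re^2 - y.im^2) / (Complex.normSq y)^2 := by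
    rw [inv_pow, Complex.inv_re, h2re, hnsq]
  unfold JK
  ext i j
  fin_cases i <;> fin_cases j <;>
    · simp only [Matrix.smul_apply, Matrix.cons_val', Matrix.cons_val_zero, Matrix.cons_val_one,
        Matrix.head_cons, Matrix.head_fin_const, Matrix.empty_val', Matrix.cons_val_fin_one,
        smul_eq_mul, him, hre, habs]
      field_simp
      ring_nf
      simp
      field_simp

theorem stmt13 (N : ℕ) (hN : 4 ≤ N)
    (ζ : ℂ) (hζ : ζ = Complex.exp (2 * Real.pi * Complex.I / ((N : ℂ) - 1)))
    (γN : ℝ) (hγ : γN = ((N : ℝ) - 2) * ((N : ℝ) - 6) / 12) :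
    γN • JK 1 + ∑ j ∈ Finset.Icc 1 (N - 2), JK (1 - ζ ^ j) = 0 := by
  have hcast : ((N - 1 : ℕ) : ℂ) = (N:ℂ) - 1 := by
    push_cast [Nat.cast_sub (by omega : 1 ≤ N)]; ring
  have hprim : IsPrimitiveRoot ζ (N - 1) := by
    have h := Complex.isPrimitiveRoot_exp (N - 1) (by omega)
    rwa [hcast, ← hζ] at h
  have hsum : ∑ j ∈ Icc 1 (N-2), ((1 - ζ^j)⁻¹)^2 = -(γN:ℂ) := by
    have h := sum_inv_sq (N-1) (by omega) ζ hprim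
    rw [show N - 1 - 1 = N - 2 from by omega, hcast] at h
    rw [h, hγ]
    push_cast
    ring
  have hres : ∑ j ∈ Icc 1 (N-2), (((1 - ζ^j)⁻¹)^2).re = -γN := by
    have := congrArg Complex.re hsum
    rw [Complex.re_sum] at this
    simpa using this
  have hims : ∑ j ∈ Icc 1 (N-2), (((1 - ζ^j)⁻¹)^2).im = 0 := by
    have := congrArg Complex.im hsum
    rw [Complex.im_sum] at this
    simpa using this
  have hne : ∀ j ∈ Icc 1 (N-2), (1 : ℂ) - ζ^j ≠ 0 := by
    intro j hj
    simp only [Finset.mem_Icc] at hj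
    have h1 : ζ^j ≠ 1 := hprim.pow_ne_one_of_pos_of_lt (by omega) (by omega)
    exact sub_ne_zero.2 (Ne.symm h1)
  have hJs : ∀ j ∈ Icc 1 (N-2), JK (1 - ζ^j) =
      !![ -((((1-ζ^j)⁻¹)^2).im) / (2*Real.pi), -((((1-ζ^j)⁻¹)^2).re) / (2*Real.pi);
          -((((1-ζ^j)⁻¹)^2).re) / (2*Real.pi), ((((1-ζ^j)⁻¹)^2).im) / (2*Real.pi)] :=
    fun j hj => JK_eq _ (hne j hj)
  have hJ1 : JK 1 = !![ 0, -1 / (2*Real.pi); -1 / (2*Real.pi), 0] := by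
    rw [JK_eq 1 one_ne_zero]
    norm_num
  rw [Finset.sum_congr rfl hJs, hJ1]
  have hres1 : ∑ j ∈ Icc 1 (N-2), ((1/(1-ζ^j)^2 : ℂ)).re = -γN := by
    simpa [one_div, ← inv_pow] using hres
  have hims1 : ∑ j ∈ Icc 1 (N-2), ((1/(1-ζ^j)^2 : ℂ)).im = 0 := by
    simpa [one_div, ← inv_pow] using hims
  ext i j
  simp only [Matrix.add_apply, Matrix.smul_apply, Matrix.sum_apply, Matrix.zero_apply,
    smul_eq_mul]
  fin_cases i <;> fin_cases j <;>
    simp only [Matrix.cons_val', Matrix.cons_val_zero, Matrix.cons_val_one, Matrix.head_cons,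
      Matrix.head_fin_const, Matrix.empty_val', Matrix.cons_val_fin_one, Fin.zero_eta,
      Fin.mk_one, Matrix.of_apply] <;>
    field_simp
  · rw [mul_zero, zero_add, Finset.sum_neg_distrib, ← Finset.sum_div, hims1, zero_div, neg_zero]
  · rw [Finset.sum_neg_distrib, ← Finset.sum_div, hres1, mul_neg, ← mul_div_assoc,
      mul_div_cancel_left₀ _ (by positivity : (2*Real.pi) ≠ 0)]
    ring
  · rw [Finset.sum_neg_distrib, ← Finset.sum_div, hres1, mul_neg, ← mul_div_assoc,
      mul_div_cancel_left₀ _ (by positivity : (2*Real.pi) ≠ 0)]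
    ring
  · rw [mul_zero, zero_add, ← Finset.sum_div, hims1, zero_div]
end
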